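/- Let f : {0,1}² → {0,1} be any Boolean function of two variables other than XOR (f(x₁,x₂) = x₁ ⊕ x₂) and EQV (f(x₁,x₂) = x₁ ⊙ x₂). Then there exist real numbers k₀, l₁, l₂, l₃, q₁, q₂, q₃ such that the quadratic pseudo-Boolean function H(x₁,x₂,z) = k₀ + l₁x₁ + l₂x₂ + l₃z + q₁x₁x₂ + q₂x₁z + q₃x₂z satisfies H(x₁,x₂,z) = 0 whenever z = f(x₁,x₂) and H(x₁,x₂,z) ≥ 1 whenever z ≠ f(x₁,x₂), for all x₁, x₂, z ∈ {0,1}. -/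
import Mathlib

/-- Coercion of a Boolean value to the real numbers `0` and `1`. -/
def b2r (b : Bool) : ℝ := if b then 1 else 0

/-- Every two-input one-output Boolean function other than XOR and EQV is
realizable as the gapped zero-energy ground space of a quadratic (2-local)
pseudo-Boolean function on three variables. -/
theorem two_local_realizable_except_xor_eqv
    (f : Bool → Bool → Bool)
    (hxor : f ≠ fun a b => xor a b)
    (heqv : f ≠ fun a b => !(xor a b)) :
    ∃ k₀ l₁ l₂ l₃ q₁ q₂ q₃ : ℝ,
      ∀ x₁ x₂ z : Bool,
        (z = f x₁ x₂ →
          k₀ + l₁ * b2r x₁ + l₂ * b2r x₂ + l₃ * b2r z + q₁ * b2r x₁ * b2r x₂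
            + q₂ * b2r x₁ * b2r z + q₃ * b2r x₂ * b2r z = 0) ∧
        (z ≠ f x₁ x₂ →
          1 ≤ k₀ + l₁ * b2r x₁ + l₂ * b2r x₂ + l₃ * b2r z + q₁ * b2r x₁ * b2r x₂
            + q₂ * b2r x₁ * b2r z + q₃ * b2r x₂ * b2r z) := by
  rcases h00 : f false false with _ | _ <;>
  rcases h01 : f false true with _ | _ <;>
  rcases h10 : f true false with _ | _ <;>
  rcases h11 : f true true with _ | _
  · refine ⟨0, 0, 0, 1, 0, 0, 0, fun x₁ x₂ z => ?_⟩
    cases x₁ <;> cases x₂ <;> cases z <;>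
      simp only [h00,h01,h10,h11,b2r] <;> norm_num
  · refine ⟨0, 0, 0, 3, 1, (-2 : ℝ), (-2 : ℝ), fun x₁ x₂ z => ?_⟩
    cases x₁ <;> cases x₂ <;> cases z <;>
      simp only [h00,h01,h10,h11,b2r] <;> norm_num
  · refine ⟨0, 1, 0, 1, (-1 : ℝ), (-2 : ℝ), 2, fun x₁ x₂ z => ?_⟩
    cases x₁ <;> cases x₂ <;> cases z <;>
      simp only [h00,h01,h10,h11,b2r] <;> norm_num
  · refine ⟨0, 1, 0, 1, 0, (-2 : ℝ), 0, fun x₁ x₂ z => ?_⟩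
    cases x₁ <;> cases x₂ <;> cases z <;>
      simp only [h00,h01,h10,h11,b2r] <;> norm_num
  · refine ⟨0, 0, 1, 1, (-1 : ℝ), 2, (-2 : ℝ), fun x₁ x₂ z => ?_⟩
    cases x₁ <;> cases x₂ <;> cases z <;>
      simp only [h00,h01,h10,h11,b2r] <;> norm_num
  · refine ⟨0, 0, 1, 1, 0, 0, (-2 : ℝ), fun x₁ x₂ z => ?_⟩
    cases x₁ <;> cases x₂ <;> cases z <;>
      simp only [h00,h01,h10,h11,b2r] <;> norm_num
  · exact absurd (funext fun a => funext fun b => by cases a <;> cases b <;> simp [h00,h01,h10,h11]) hxor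
  · refine ⟨0, 1, 1, 1, 1, (-2 : ℝ), (-2 : ℝ), fun x₁ x₂ z => ?_⟩
    cases x₁ <;> cases x₂ <;> cases z <;>
      simp only [h00,h01,h10,h11,b2r] <;> norm_num
  · refine ⟨1, (-1 : ℝ), (-1 : ℝ), (-1 : ℝ), 1, 2, 2, fun x₁ x₂ z => ?_⟩
    cases x₁ <;> cases x₂ <;> cases z <;>
      simp only [h00,h01,h10,h11,b2r] <;> norm_num
  · exact absurd (funext fun a => funext fun b => by cases a <;> cases b <;> simp [h00,h01,h10,h11]) heqv
  · refine ⟨1, 0, (-1 : ℝ), (-1 : ℝ), 0, 0, 2, fun x₁ x₂ z => ?_⟩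
    cases x₁ <;> cases x₂ <;> cases z <;>
      simp only [h00,h01,h10,h11,b2r] <;> norm_num
  · refine ⟨1, 2, (-1 : ℝ), (-1 : ℝ), (-1 : ℝ), (-2 : ℝ), 2, fun x₁ x₂ z => ?_⟩
    cases x₁ <;> cases x₂ <;> cases z <;>
      simp only [h00,h01,h10,h11,b2r] <;> norm_num
  · refine ⟨1, (-1 : ℝ), 0, (-1 : ℝ), 0, 2, 0, fun x₁ x₂ z => ?_⟩
    cases x₁ <;> cases x₂ <;> cases z <;>
      simp only [h00,h01,h10,h11,b2r] <;> norm_num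
  · refine ⟨1, (-1 : ℝ), 2, (-1 : ℝ), (-1 : ℝ), 2, (-2 : ℝ), fun x₁ x₂ z => ?_⟩
    cases x₁ <;> cases x₂ <;> cases z <;>
      simp only [h00,h01,h10,h11,b2r] <;> norm_num
  · refine ⟨3, (-2 : ℝ), (-2 : ℝ), (-3 : ℝ), 1, 2, 2, fun x₁ x₂ z => ?_⟩
    cases x₁ <;> cases x₂ <;> cases z <;>
      simp only [h00,h01,h10,h11,b2r] <;> norm_num
  · refine ⟨1, 0, 0, (-1 : ℝ), 0, 0, 0, fun x₁ x₂ z => ?_⟩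
    cases x₁ <;> cases x₂ <;> cases z <;>
      simp only [h00,h01,h10,h11,b2r] <;> norm_num
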